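/- For a simple max-stable random vector with exponent function V induced by spectral measure H, the following additivity equivalence holds: V^{A∪B}(x) = V^A(x_A) + V^B(x_B) for all x if and only if H-almost every ω ∈ S_+ satisfies min(max_{i∈A} ω_i, max_{i∈B} ω_i) = 0, i.e. the spectral measure puts no mass where coordinates in both A and B are simultaneously positive. -/

import Mathlib

open Finset MeasureTheory

/-- Maximum over a finite set with the convention `max ∅ = 0`. -/
noncomputable def fmax {ι : Type*} (S : Finset ι) (a : ι → ℝ) : ℝ := S.fold max 0 a

lemma fmax_nonneg {ι : Type*} (S : Finset ι) (a : ι → ℝ) : 0 ≤ fmax S a := by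
  rw [fmax, Finset.le_fold_max]; left; rfl

lemma fmax_insert {ι : Type*} [DecidableEq ι] (S : Finset ι) (a : ι → ℝ) (i : ι) :
    fmax (insert i S) a = max (a i) (fmax S a) := Finset.fold_insert_idem

lemma fmax_union {ι : Type*} [DecidableEq ι] (A B : Finset ι) (a : ι → ℝ) :
    fmax (A ∪ B) a = max (fmax A a) (fmax B a) := by
  induction A using Finset.induction_on with
  | empty =>
      simp only [Finset.empty_union]
      rw [show fmax ∅ a = 0 from rfl, max_eq_right (fmax_nonneg B a)]
  | insert _ _ h ih =>
      rename_i i s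
      rw [Finset.insert_union, fmax_insert, fmax_insert, ih, max_assoc]

lemma fmax_eq_zero_iff {ι : Type*} (S : Finset ι) (a : ι → ℝ) (ha : ∀ i ∈ S, 0 ≤ a i) :
    fmax S a = 0 ↔ ∀ i ∈ S, a i = 0 := by
  constructor
  · intro h i hi
    have h1 : a i ≤ fmax S a := by
      rw [fmax, Finset.le_fold_max]; right; exact ⟨i, hi, le_rfl⟩
    exact le_antisymm (h ▸ h1) (ha i hi)
  · intro h
    refine le_antisymm ?_ (fmax_nonneg S a)
    rw [fmax, Finset.fold_max_le]
    exact ⟨le_rfl, fun i hi => (h i hi).le⟩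

lemma integrable_fmax {ι : Type*} [Fintype ι] (H : Measure (ι → ℝ)) [IsFiniteMeasure H]
    (hint : ∀ i, Integrable (fun ω => ω i) H) (S : Finset ι) (x : ι → ℝ) :
    Integrable (fun ω => fmax S (fun i => ω i / x i)) H := by
  classical
  induction S using Finset.induction_on with
  | empty => simpa [fmax] using integrable_const (0:ℝ)
  | insert _ _ h ih =>
      rename_i i s
      simp only [fmax_insert]
      have h1 : Integrable (fun ω => ω i / x i) H := by
        simpa [div_eq_mul_inv] using (hint i).mul_const (x i)⁻¹
      exact h1.sup ih

/-- For `V^J(x) = ∫ max_{i∈J} ω_i/x_i dH` induced by a spectral measure `H`, and disjoint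
nonempty `A, B ⊆ I`: `V^{A∪B} = V^A + V^B` for all `x > 0` if and only if `H`-almost every
`ω` satisfies `min(max_{i∈A} ω_i, max_{i∈B} ω_i) = 0`, i.e. `H` puts no mass where
coordinates in both `A` and `B` are simultaneously positive. -/
theorem additivity_iff_no_joint_mass {ι : Type*} [Fintype ι] [DecidableEq ι]
    (H : Measure (ι → ℝ)) [IsFiniteMeasure H]
    (hpos : ∀ᵐ ω ∂H, ∀ i, 0 ≤ ω i)
    (hsphere : ∀ᵐ ω ∂H, ‖ω‖ = 1)
    (hint : ∀ i, Integrable (fun ω => ω i) H)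
    (A B : Finset ι) (hA : A.Nonempty) (hB : B.Nonempty) (hAB : Disjoint A B) :
    (∀ x : ι → ℝ, (∀ i, 0 < x i) →
        (∫ ω, fmax (A ∪ B) (fun i => ω i / x i) ∂H)
          = (∫ ω, fmax A (fun i => ω i / x i) ∂H) + (∫ ω, fmax B (fun i => ω i / x i) ∂H))
      ↔ (∀ᵐ ω ∂H, min (fmax A ω) (fmax B ω) = 0) := by
  -- key equivalence: for each positive x, the additivity at x is equivalent to the
  -- vanishing of the integral of the min
  have key : ∀ x : ι → ℝ, (∀ i, 0 < x i) →
      ((∫ ω, fmax (A ∪ B) (fun i => ω i / x i) ∂H)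
          = (∫ ω, fmax A (fun i => ω i / x i) ∂H) + (∫ ω, fmax B (fun i => ω i / x i) ∂H)
        ↔ (∀ᵐ ω ∂H, min (fmax A (fun i => ω i / x i)) (fmax B (fun i => ω i / x i)) = 0)) := by
    intro x hx
    have hiA := integrable_fmax H hint A x
    have hiB := integrable_fmax H hint B x
    have hiMax : Integrable (fun ω => max (fmax A (fun i => ω i / x i))
        (fmax B (fun i => ω i / x i))) H := hiA.sup hiB
    have hiMin : Integrable (fun ω => min (fmax A (fun i => ω i / x i))
        (fmax B (fun i => ω i / x i))) H := hiA.inf hiB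
    have hsum : (∫ ω, fmax A (fun i => ω i / x i) ∂H) + (∫ ω, fmax B (fun i => ω i / x i) ∂H)
        = (∫ ω, min (fmax A (fun i => ω i / x i)) (fmax B (fun i => ω i / x i)) ∂H)
          + (∫ ω, max (fmax A (fun i => ω i / x i)) (fmax B (fun i => ω i / x i)) ∂H) := by
      rw [← integral_add hiA hiB, ← integral_add hiMin hiMax]
      congr 1; funext ω; rw [min_add_max]
    have hAB' : (∫ ω, fmax (A ∪ B) (fun i => ω i / x i) ∂H)
        = ∫ ω, max (fmax A (fun i => ω i / x i)) (fmax B (fun i => ω i / x i)) ∂H := by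
      congr 1; funext ω; rw [fmax_union]
    rw [hAB', hsum]
    constructor
    · intro h
      have h0 : (∫ ω, min (fmax A (fun i => ω i / x i)) (fmax B (fun i => ω i / x i)) ∂H) = 0 := by
        linarith
      have := (integral_eq_zero_iff_of_nonneg
        (fun ω => le_min (fmax_nonneg _ _) (fmax_nonneg _ _)) hiMin).mp h0
      filter_upwards [this] with ω hω
      simpa using hω
    · intro h
      have h0 : (∫ ω, min (fmax A (fun i => ω i / x i)) (fmax B (fun i => ω i / x i)) ∂H) = 0 :=
        integral_eq_zero_of_ae h
      linarith
  constructor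
  · intro hadd
    have h1 := (key (fun _ => 1) (fun _ => one_pos)).mp (hadd _ (fun _ => one_pos))
    filter_upwards [h1] with ω hω
    simpa using hω
  · intro h x hx
    rw [key x hx]
    filter_upwards [h, hpos] with ω hω hωpos
    -- transfer min = 0 from ω to ω/x
    have hnn : ∀ (S : Finset ι) (i : ι), i ∈ S → (0:ℝ) ≤ ω i / x i :=
      fun S i _ => div_nonneg (hωpos i) (hx i).le
    rcases min_eq_iff.mp hω with ⟨hz, _⟩ | ⟨hz, _⟩
    · have : ∀ i ∈ A, ω i / x i = 0 := by
        intro i hi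
        have := (fmax_eq_zero_iff A ω (fun i _ => hωpos i)).mp hz i hi
        simp [this]
      rw [min_eq_left_iff.mpr, (fmax_eq_zero_iff A _ (hnn A)).mpr this]
      rw [(fmax_eq_zero_iff A _ (hnn A)).mpr this]
      exact fmax_nonneg _ _
    · have : ∀ i ∈ B, ω i / x i = 0 := by
        intro i hi
        have := (fmax_eq_zero_iff B ω (fun i _ => hωpos i)).mp hz i hi
        simp [this]
      rw [min_eq_right_iff.mpr, (fmax_eq_zero_iff B _ (hnn B)).mpr this]
      rw [(fmax_eq_zero_iff B _ (hnn B)).mpr this]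
      exact fmax_nonneg _ _
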